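/- arXiv:2006.08353 — 2 statements merged into one kernel-verified Lean document; each statement's English description precedes it below -/
import Mathlib

section
/- Let 0<μ<1 and α,β>0 with α+β=1, and set A=α−β·cos(μπ), B=β·sin(μπ). Let θ∈[0,2π) be the unique angle with (A−iB)/(A+iB)=e^{iθ}. Then 2πμ<θ<2π, i.e. μ<θ/(2π)<1. -/
open MeasureTheory Filter Set

noncomputable section

/-- Left Riemann–Liouville fractional integral of order `σ > 0` based at `a`. -/
def RLIleft (σ a : ℝ) (u : ℝ → ℝ) (x : ℝ) : ℝ :=
  (1 / Real.Gamma σ) * ∫ t in a..x, (x - t) ^ (σ - 1) * u t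

/-- Right Riemann–Liouville fractional integral of order `σ > 0` based at `b`. -/
def RLIright (σ b : ℝ) (u : ℝ → ℝ) (x : ℝ) : ℝ :=
  (1 / Real.Gamma σ) * ∫ t in x..b, (t - x) ^ (σ - 1) * u t

/-- Left Riemann–Liouville fractional derivative of order `μ ∈ (0,1)`. -/
def RLDleft (μ a : ℝ) (u : ℝ → ℝ) (x : ℝ) : ℝ := deriv (RLIleft (1 - μ) a u) x

/-- Right Riemann–Liouville fractional derivative of order `μ ∈ (0,1)`. -/
def RLDright (μ b : ℝ) (u : ℝ → ℝ) (x : ℝ) : ℝ := - deriv (RLIright (1 - μ) b u) x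

/-- `f` is `lam`-Hölder continuous on `[a,b]`. -/
def HolderOnIcc (lam a b : ℝ) (f : ℝ → ℝ) : Prop :=
  ∃ C : ℝ, 0 ≤ C ∧ ∀ x ∈ Icc a b, ∀ y ∈ Icc a b, |f x - f y| ≤ C * |x - y| ^ lam

/-- `f ∈ H(Ω̄) = ∪_{0<λ≤1} H^λ([a,b])`. -/
def MemHbar (a b : ℝ) (f : ℝ → ℝ) : Prop :=
  ∃ lam : ℝ, 0 < lam ∧ lam ≤ 1 ∧ HolderOnIcc lam a b f

/-- `f ∈ H^λ_0([a,b])` : Hölder on `[a,b]`, vanishing at the endpoints. -/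
def MemH0 (lam a b : ℝ) (f : ℝ → ℝ) : Prop :=
  HolderOnIcc lam a b f ∧ f a = 0 ∧ f b = 0

/-- `f ∈ H^λ_0(ε₁,ε₂)` : `f(x) = g(x)/((x-a)^{1-ε₁}(b-x)^{1-ε₂})` on `(a,b)` with
`g ∈ H^λ_0([a,b])`. -/
def MemHstarPiece (lam e1 e2 a b : ℝ) (f : ℝ → ℝ) : Prop :=
  ∃ g : ℝ → ℝ, MemH0 lam a b g ∧
    ∀ x ∈ Ioo a b, f x = g x / ((x - a) ^ (1 - e1) * (b - x) ^ (1 - e2))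

/-- `f ∈ H^*(Ω)`. -/
def MemHstar (a b : ℝ) (f : ℝ → ℝ) : Prop :=
  ∃ lam e1 e2 : ℝ, 0 < lam ∧ lam ≤ 1 ∧ 0 < e1 ∧ 0 < e2 ∧ MemHstarPiece lam e1 e2 a b f

/-- `f ∈ H^*_σ(Ω)`. -/
def MemHstarSigma (σ a b : ℝ) (f : ℝ → ℝ) : Prop :=
  ∃ lam e1 e2 : ℝ, σ < lam ∧ lam ≤ 1 ∧ 0 < e1 ∧ 0 < e2 ∧ MemHstarPiece lam e1 e2 a b f

/-- The Cauchy principal value `p.v.∫_a^b φ(t)/(t-x) dt = L`. -/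
def HasPV (φ : ℝ → ℝ) (a b x L : ℝ) : Prop :=
  Tendsto (fun ε : ℝ =>
      (∫ t in a..(x - ε), φ t / (t - x)) + ∫ t in (x + ε)..b, φ t / (t - x))
    (nhdsWithin 0 (Ioi 0)) (nhds L)

/-- Extension of a function on `(a,b)` by zero to all of `ℝ`. -/
def zeroExt (a b : ℝ) (u : ℝ → ℝ) : ℝ → ℝ := fun x => if x ∈ Ioo a b then u x else 0

/-- Fourier transform `ŵ(ξ) = ∫ e^{-2πixξ} w(x) dx` of a real-valued function. -/
def FT (w : ℝ → ℝ) : ℝ → ℂ := FourierTransform.fourier (fun x : ℝ => (w x : ℂ))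

/-- Square of the `Ĥ^s(ℝ)` norm. -/
def HsNormSq (s : ℝ) (w : ℝ → ℝ) : ℝ :=
  (∫ x : ℝ, (w x) ^ 2) +
    ∫ ξ : ℝ, |2 * Real.pi * ξ| ^ (2 * s) * Complex.normSq (FT w ξ)

/-- `w ∈ Ĥ^s(ℝ)`. -/
def MemHhatR (s : ℝ) (w : ℝ → ℝ) : Prop :=
  MeasureTheory.MemLp w 2 volume ∧
  MeasureTheory.Integrable
    (fun ξ : ℝ => (1 + |2 * Real.pi * ξ| ^ (2 * s)) * Complex.normSq (FT w ξ)) volume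

/-- `u ∈ Ĥ^s_0(Ω)` for `Ω = (a,b)` : the zero extension of `u` lies in `Ĥ^s(ℝ)` and is
the `Ĥ^s`-limit of smooth functions compactly supported in `(a,b)`. -/
def MemHhat0 (s a b : ℝ) (u : ℝ → ℝ) : Prop :=
  MemHhatR s (zeroExt a b u) ∧
  ∃ φ : ℕ → ℝ → ℝ,
    (∀ n, ContDiff ℝ (⊤ : ℕ∞) (φ n) ∧ HasCompactSupport (φ n) ∧ tsupport (φ n) ⊆ Ioo a b) ∧
    Tendsto (fun n => HsNormSq s (fun x => zeroExt a b u x - φ n x)) atTop (nhds 0)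

/-- `φ` (a function on `(a,b)`) extends continuously to `(a,b]`. -/
def ContOnIoc (a b : ℝ) (φ : ℝ → ℝ) : Prop :=
  ∃ h : ℝ → ℝ, ContinuousOn h (Ioc a b) ∧ EqOn φ h (Ioo a b)

/-- `φ` (a function on `(a,b)`) extends continuously to `[a,b)`. -/
def ContOnIco (a b : ℝ) (φ : ℝ → ℝ) : Prop :=
  ∃ h : ℝ → ℝ, ContinuousOn h (Ico a b) ∧ EqOn φ h (Ioo a b)

/-- `φ` solves the dominant singular integral equation
`A φ(x) + (B/π) p.v.∫_a^b φ(t)/(t-x) dt = F(x)` on `(a,b)`. -/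
def IsDSISolution (A B a b : ℝ) (F φ : ℝ → ℝ) : Prop :=
  ∀ x ∈ Ioo a b, ∃ L : ℝ, HasPV φ a b x L ∧ A * φ x + (B / Real.pi) * L = F x

theorem stmt5
    (μ α β A B θ : ℝ)
    (hμ0 : 0 < μ) (hμ1 : μ < 1)
    (hα : 0 < α) (hβ : 0 < β) (hαβ : α + β = 1)
    (hA : A = α - β * Real.cos (μ * Real.pi)) (hB : B = β * Real.sin (μ * Real.pi))
    (hθ0 : 0 ≤ θ) (hθ2 : θ < 2 * Real.pi)
    (hθeq : ((A : ℂ) - Complex.I * (B : ℂ)) / ((A : ℂ) + Complex.I * (B : ℂ)) =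
      Complex.exp (Complex.I * (θ : ℂ)))
    :
    2 * Real.pi * μ < θ ∧ θ < 2 * Real.pi := by
  refine ⟨?_, hθ2⟩
  have hπ := Real.pi_pos
  set s := μ * Real.pi with hs
  have hs0 : 0 < s := by positivity
  have hsπ : s < Real.pi := by nlinarith
  have hsin : 0 < Real.sin s := Real.sin_pos_of_pos_of_lt_pi hs0 hsπ
  have hBpos : 0 < B := by rw [hB]; positivity
  set z : ℂ := (A : ℂ) + Complex.I * B with hz
  have hzim : z.im = B := by simp [hz]
  have hzre : z.re = A := by simp [hz]
  have hzne : z ≠ 0 := by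
    intro h
    rw [Complex.ext_iff] at h
    simp [hzim] at h
    exact absurd h.2 (ne_of_gt hBpos)
  have habs : (0:ℝ) < ‖z‖ := norm_pos_iff.mpr hzne
  set φ := Complex.arg z with hφ
  have hφπ : φ ≤ Real.pi := Complex.arg_le_pi z
  have hφ0 : 0 < φ := by
    rcases lt_or_eq_of_le (Complex.arg_nonneg_iff.mpr (by rw [hzim]; exact hBpos.le)) with h | h
    · exact h
    · exfalso
      have h2 := Complex.arg_eq_zero_iff.mp h.symm
      rw [hzim] at h2
      exact absurd h2.2 (ne_of_gt hBpos)
  have hzrep : ((‖z‖ : ℝ) : ℂ) * Complex.exp (φ * Complex.I) = z :=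
    Complex.norm_mul_exp_arg_mul_I z
  have hconjrep : (starRingEnd ℂ) z
      = ((‖z‖ : ℝ) : ℂ) * Complex.exp (((-φ : ℝ) : ℂ) * Complex.I) := by
    conv_lhs => rw [← hzrep]
    rw [map_mul, ← Complex.exp_conj]
    congr 1
    · simp
    · congr 1
      simp [Complex.ext_iff]
  -- key inequality : φ < π - s
  have key : φ < Real.pi - s := by
    have him : ((starRingEnd ℂ) z * Complex.exp ((Real.pi - s : ℝ) * Complex.I)).im
        = α * Real.sin s := by
      rw [Complex.exp_mul_I]
      simp [Complex.mul_im, hzre, hzim, Real.sin_pi_sub, Real.cos_pi_sub, hA, hB,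
        Complex.cos_ofReal_re, Complex.sin_ofReal_re, Complex.cos_ofReal_im,
        Complex.sin_ofReal_im, ← Complex.ofReal_sub]
      ring
    have him2 : ((starRingEnd ℂ) z * Complex.exp ((Real.pi - s : ℝ) * Complex.I)).im
        = ‖z‖ * Real.sin (Real.pi - s - φ) := by
      rw [hconjrep, mul_assoc, ← Complex.exp_add]
      have he : ((-φ : ℝ) : ℂ) * Complex.I + ((Real.pi - s : ℝ) : ℂ) * Complex.I
          = ((Real.pi - s - φ : ℝ) : ℂ) * Complex.I := by push_cast; ring
      rw [he, Complex.exp_mul_I]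
      simp only [Complex.mul_im, Complex.mul_re, Complex.add_im, Complex.add_re,
        Complex.ofReal_re, Complex.ofReal_im, Complex.I_re, Complex.I_im,
        Complex.cos_ofReal_re, Complex.sin_ofReal_re, Complex.cos_ofReal_im,
        Complex.sin_ofReal_im]
      ring
    have hsinpos : 0 < Real.sin (Real.pi - s - φ) := by
      have hpos : 0 < ‖z‖ * Real.sin (Real.pi - s - φ) := by
        rw [← him2, him]; positivity
      nlinarith
    by_contra hcon
    push_neg at hcon
    have : Real.sin (Real.pi - s - φ) ≤ 0 :=
      Real.sin_nonpos_of_nonpos_of_neg_pi_le (by linarith) (by linarith)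
    linarith
  -- from hθeq, derive θ = 2π - 2φ
  have hconj2 : ((A : ℂ) - Complex.I * B) = (starRingEnd ℂ) z := by
    simp [hz, Complex.ext_iff]
  have hdiv : (starRingEnd ℂ) z / z = Complex.exp (((-(2*φ) : ℝ) : ℂ) * Complex.I) := by
    have haux : Complex.exp (((-(2*φ) : ℝ) : ℂ) * Complex.I) * Complex.exp (((φ : ℝ) : ℂ) * Complex.I)
        = Complex.exp (((-φ : ℝ) : ℂ) * Complex.I) := by
      rw [← Complex.exp_add]; congr 1; push_cast; ring
    rw [div_eq_iff hzne, hconjrep]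
    conv_rhs => rw [← hzrep]
    rw [← haux]
    ring
  have hexp : Complex.exp (Complex.I * θ)
      = Complex.exp (((-(2*φ) : ℝ) : ℂ) * Complex.I) := by
    rw [← hθeq, hconj2, hdiv]
  rw [Complex.exp_eq_exp_iff_exists_int] at hexp
  obtain ⟨n, hn⟩ := hexp
  have hnim : θ = -(2*φ) + n * (2 * Real.pi) := by
    have := congrArg Complex.im hn
    simpa using this
  have hn1 : n = 1 := by
    have hr1 : (0:ℝ) < (n:ℝ) * (2 * Real.pi) := by nlinarith
    have hr2 : (n:ℝ) * (2 * Real.pi) < 2 * (2 * Real.pi) := by nlinarith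
    have h1 : (0:ℝ) < (n:ℝ) := by nlinarith
    have h2 : (n:ℝ) < 2 := by nlinarith
    have h1' : 0 < n := by exact_mod_cast h1
    have h2' : n < 2 := by exact_mod_cast h2
    omega
  rw [hn1] at hnim
  push_cast at hnim
  nlinarith
end
end

section
/- Let 0<μ<1 and α,β>0 with α+β=1, and set A=α−β·cos(μπ), B=β·sin(μπ). Let θ∈[0,2π) be the unique angle with (A−iB)/(A+iB)=e^{iθ}. Then sin(θ/2)≠0 and α/β = sin(θ/2−μπ)/sin(θ/2). -/
open MeasureTheory Filter Set

noncomputable section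

theorem stmt6
    (μ α β A B θ : ℝ)
    (hμ0 : 0 < μ) (hμ1 : μ < 1)
    (hα : 0 < α) (hβ : 0 < β) (hαβ : α + β = 1)
    (hA : A = α - β * Real.cos (μ * Real.pi)) (hB : B = β * Real.sin (μ * Real.pi))
    (hθ0 : 0 ≤ θ) (hθ2 : θ < 2 * Real.pi)
    (hθeq : ((A : ℂ) - Complex.I * (B : ℂ)) / ((A : ℂ) + Complex.I * (B : ℂ)) =
      Complex.exp (Complex.I * (θ : ℂ)))
    :
    Real.sin (θ / 2) ≠ 0 ∧
    α / β = Real.sin (θ / 2 - μ * Real.pi) / Real.sin (θ / 2) := by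
  have hπ := Real.pi_pos
  have hsμ : 0 < Real.sin (μ * Real.pi) :=
    Real.sin_pos_of_pos_of_lt_pi (by positivity) (by nlinarith)
  have hBpos : 0 < B := by rw [hB]; positivity
  have hden : ((A : ℂ) + Complex.I * (B : ℂ)) ≠ 0 := by
    intro h
    have := congrArg Complex.im h
    simp at this
    linarith
  have h1 : ((A : ℂ) - Complex.I * (B : ℂ)) =
      ((A : ℂ) + Complex.I * (B : ℂ)) * Complex.exp (Complex.I * (θ : ℂ)) := by
    rw [← hθeq]; field_simp
  rw [mul_comm Complex.I (θ:ℂ), Complex.exp_mul_I, ← Complex.ofReal_cos,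
    ← Complex.ofReal_sin] at h1
  have hre := congrArg Complex.re h1
  have him := congrArg Complex.im h1
  simp [Complex.add_re, Complex.add_im, Complex.mul_re, Complex.mul_im,
    Complex.cos_ofReal_re, Complex.sin_ofReal_re] at hre him
  set t := θ / 2 with ht
  have h2t : θ = 2 * t := by rw [ht]; ring
  have hcos : Real.cos θ = 1 - 2 * Real.sin t ^ 2 := by
    rw [h2t, Real.cos_two_mul]; nlinarith [Real.sin_sq_add_cos_sq t]
  have hsin : Real.sin θ = 2 * Real.sin t * Real.cos t := by
    rw [h2t, Real.sin_two_mul]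
  have hst : Real.sin t ≠ 0 := by
    intro h0
    have ht0 : t = 0 := by
      by_contra hne
      have : 0 < Real.sin t :=
        Real.sin_pos_of_pos_of_lt_pi (lt_of_le_of_ne (by rw [ht]; linarith) (by
          intro h; exact hne h.symm)) (by rw [ht]; linarith)
      linarith [this.ne' h0]
    have hθ0' : θ = 0 := by rw [ht] at ht0; linarith
    rw [hθ0'] at him
    simp at him
    linarith
  refine ⟨hst, ?_⟩
  have key : A * Real.sin t + B * Real.cos t = 0 := by
    rw [hcos, hsin] at hre
    have h2 : Real.sin t * (A * Real.sin t + B * Real.cos t) = 0 := by nlinarith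
    rcases mul_eq_zero.mp h2 with h | h
    · exact absurd h hst
    · exact h
  rw [hA, hB] at key
  have hmain : β * Real.sin (t - μ * Real.pi) = α * Real.sin t := by
    rw [Real.sin_sub]
    linear_combination -key
  rw [div_eq_div_iff hβ.ne' hst]
  linarith [hmain]
end
end
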